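/- arXiv:2008.06719 — 4 statements merged into one kernel-verified Lean document; each statement's English description precedes it below -/
import Mathlib

section
/- Let C ⊆ ℝ^d be a polyhedral cone with trivial lineality space, i.e. C ∩ (−C) = {0}, and let v ∈ ℝ^d be a nonzero vector. Then at least one of the cones pos(C ∪ {v}) or pos(C ∪ {−v}) has trivial lineality space. -/
open scoped RealInnerProductSpace Pointwise Classical
open Set

noncomputable section

abbrev E (d : ℕ) : Type := EuclideanSpace ℝ (Fin d)

variable {d : ℕ}

/-- Positive hull: all finite nonnegative combinations of elements of `A`. -/
def posHull (A : Set (E d)) : Set (E d) :=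
  {x | ∃ (n : ℕ) (c : Fin n → ℝ) (v : Fin n → E d),
    (∀ i, 0 ≤ c i) ∧ (∀ i, v i ∈ A) ∧ x = ∑ i, c i • v i}

/-- Dual (polar) cone. -/
def polarCone (C : Set (E d)) : Set (E d) := {z | ∀ y ∈ C, ⟪z, y⟫ ≤ 0}

/-- A polyhedral cone: finite intersection of linear closed half-spaces. -/
def IsPolyCone (C : Set (E d)) : Prop :=
  ∃ (m : ℕ) (y : Fin m → E d), C = {z | ∀ i, ⟪z, y i⟫ ≤ 0}

/-- A polyhedral set: finite intersection of closed half-spaces. -/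
def IsPolyhedron (P : Set (E d)) : Prop :=
  ∃ (m : ℕ) (y : Fin m → E d) (c : Fin m → ℝ), P = {z | ∀ i, ⟪z, y i⟫ ≤ c i}

/-- Faces of `P`: `P` itself, or intersections with supporting hyperplanes. -/
def IsFaceOf (P F : Set (E d)) : Prop :=
  F = P ∨ ∃ (y : E d) (c : ℝ), (∀ z ∈ P, ⟪y, z⟫ ≤ c) ∧ F = {z | z ∈ P ∧ ⟪y, z⟫ = c}

/-- Dimension of a set: dimension of its affine hull. -/
def sdim (F : Set (E d)) : ℕ := Module.finrank ℝ (affineSpan ℝ F).direction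

/-- The `k`-dimensional (nonempty) faces of `P`. -/
def facesOfDim (P : Set (E d)) (k : ℕ) : Set (Set (E d)) :=
  {F | IsFaceOf P F ∧ F.Nonempty ∧ sdim F = k}

/-- Tangent cone of `P` at a point `f₀`. -/
def tangentConeOf (P : Set (E d)) (f₀ : E d) : Set (E d) :=
  {u | ∃ δ : ℝ, 0 < δ ∧ f₀ + δ • u ∈ P}

/-- Normal cone of `P` at its face `F`: polar of the tangent cone at any
relative interior point of `F`. -/
def normalCone (P F : Set (E d)) : Set (E d) :=
  {z | ∀ f₀ ∈ intrinsicInterior ℝ F, ∀ u ∈ tangentConeOf P f₀, ⟪z, u⟫ ≤ 0}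

/-- `y` is a nearest point of `P` to `x`. -/
def IsNearestPt (P : Set (E d)) (x y : E d) : Prop :=
  y ∈ P ∧ ∀ z ∈ P, dist x y ≤ dist x z

/-- `dim(x,P) = k`: the metric projection of `x` onto `P` lies in the relative
interior of a `k`-dimensional face of `P`. -/
def projDimEq (P : Set (E d)) (x : E d) (k : ℕ) : Prop :=
  ∃ y F, IsNearestPt P x y ∧ IsFaceOf P F ∧ y ∈ intrinsicInterior ℝ F ∧ sdim F = k

def IsHyperplane (H : Set (E d)) : Prop :=
  ∃ (y : E d) (c : ℝ), y ≠ 0 ∧ H = {z | ⟪y, z⟫ = c}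

def IsLinearHyperplane (H : Set (E d)) : Prop :=
  ∃ y : E d, y ≠ 0 ∧ H = {z | ⟪y, z⟫ = 0}

/-- Closed chambers of the complement of the set `S`. -/
def IsChamberOfUnion (S P : Set (E d)) : Prop :=
  ∃ x : E d, x ∉ S ∧ P = closure (connectedComponentIn Sᶜ x)

/-- Closed chambers of the hyperplane arrangement `A`. -/
def IsChamber (A : Finset (Set (E d))) (P : Set (E d)) : Prop :=
  IsChamberOfUnion (⋃ H ∈ A, H) P

/-- Intersection of a finite subcollection of hyperplanes (`⊤` for `∅`). -/
def interSet (B : Finset (Set (E d))) : Set (E d) := ⋂ H ∈ B, H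

/-- The unsigned coefficient `a_k` of the characteristic polynomial:
`χ_A(t) = Σ_k (-1)^(d-k) a_k t^k` via Whitney's formula. -/
def charCoeff (A : Finset (Set (E d))) (k : ℕ) : ℤ :=
  (-1 : ℤ) ^ (d - k) *
    ∑ B ∈ A.powerset,
      if (interSet B).Nonempty ∧ sdim (interSet B) = k then (-1 : ℤ) ^ B.card else 0

lemma zero_mem_posHull (A : Set (E d)) : (0 : E d) ∈ posHull A :=
  ⟨0, fun i => 0, fun i => i.elim0, fun i => i.elim0, fun i => i.elim0, by simp⟩

lemma posHull_decomp {C : Set (E d)} (h0 : (0 : E d) ∈ C)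
    (hadd : ∀ a ∈ C, ∀ b ∈ C, a + b ∈ C)
    (hsmul : ∀ t : ℝ, 0 ≤ t → ∀ a ∈ C, t • a ∈ C)
    {v x : E d} (hx : x ∈ posHull (C ∪ {v})) :
    ∃ c ∈ C, ∃ t : ℝ, 0 ≤ t ∧ x = c + t • v := by
  obtain ⟨n, cc, u, hnn, hmem, rfl⟩ := hx
  refine ⟨∑ i, if u i ∈ C then cc i • u i else 0, ?_,
    ∑ i, if u i ∈ C then 0 else cc i, ?_, ?_⟩
  · refine Finset.sum_induction _ (· ∈ C) (fun a b ha hb => hadd a ha b hb) h0 ?_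
    intro i _
    by_cases h : u i ∈ C
    · simpa [h] using hsmul (cc i) (hnn i) (u i) h
    · simpa [h] using h0
  · exact Finset.sum_nonneg fun i _ => by
      by_cases h : u i ∈ C <;> simp [h, hnn i]
  · rw [Finset.sum_smul, ← Finset.sum_add_distrib]
    refine Finset.sum_congr rfl fun i _ => ?_
    by_cases h : u i ∈ C
    · simp [h]
    · have : u i = v := by
        rcases hmem i with h' | h'
        · exact absurd h' h
        · exact h'
      rw [this]
      by_cases hvc : v ∈ C <;> simp [hvc]

/-- adjoining `v` or `-v` to a line-free polyhedral cone keeps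
at least one of the two positive hulls line-free. -/
theorem stmt0 {d : ℕ} {C : Set (E d)} (hC : IsPolyCone C)
    (hlin : C ∩ (-C) = {0}) {v : E d} (hv : v ≠ 0) :
    posHull (C ∪ {v}) ∩ (-posHull (C ∪ {v})) = {0} ∨
    posHull (C ∪ {-v}) ∩ (-posHull (C ∪ {-v})) = {0} := by
  obtain ⟨m, y, rfl⟩ := hC
  set C : Set (E d) := {z | ∀ i, ⟪z, y i⟫ ≤ 0} with hCdef
  have h0 : (0 : E d) ∈ C := fun i => by simp
  have hadd : ∀ a ∈ C, ∀ b ∈ C, a + b ∈ C := fun a ha b hb i => by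
    have := add_nonpos (ha i) (hb i)
    simpa [inner_add_left] using this
  have hsmul : ∀ t : ℝ, 0 ≤ t → ∀ a ∈ C, t • a ∈ C := fun t ht a ha i => by
    have := mul_nonpos_of_nonneg_of_nonpos ht (ha i)
    simpa [real_inner_smul_left, Finset.mul_sum, mul_assoc] using this
  by_contra hcon
  push_neg at hcon
  obtain ⟨h1, h2⟩ := hcon
  have key : ∀ w : E d,
      posHull (C ∪ {w}) ∩ (-posHull (C ∪ {w})) ≠ {0} → -w ∈ C := by
    intro w hne
    -- the intersection contains 0, so it must contain a nonzero point
    have hsub : {(0 : E d)} ⊆ posHull (C ∪ {w}) ∩ (-posHull (C ∪ {w})) := by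
      intro z hz
      rw [mem_singleton_iff] at hz
      subst hz
      exact ⟨zero_mem_posHull _, by
        rw [Set.mem_neg, neg_zero]; exact zero_mem_posHull _⟩
    obtain ⟨x, hxmem, hx0⟩ : ∃ x ∈ posHull (C ∪ {w}) ∩ (-posHull (C ∪ {w})), x ≠ 0 := by
      by_contra hall
      push_neg at hall
      exact hne (Subset.antisymm (fun z hz => hall z hz) hsub)
    obtain ⟨hx1, hx2⟩ := hxmem
    rw [Set.mem_neg] at hx2
    obtain ⟨c₁, hc₁, s, hs, hxs⟩ := posHull_decomp h0 hadd hsmul hx1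
    obtain ⟨c₂, hc₂, t, ht, hxt⟩ := posHull_decomp h0 hadd hsmul hx2
    have hsum : c₁ + c₂ + (s + t) • w = 0 := by
      have := congrArg₂ (· + ·) hxs hxt
      simp only [add_neg_cancel] at this
      have h' := this.symm
      rw [add_smul, show c₁ + c₂ + (s • w + t • w) = c₁ + s • w + (c₂ + t • w) by abel]
      exact h'
    rcases eq_or_lt_of_le (add_nonneg hs ht) with hst | hst
    · -- s + t = 0, so x ∈ C ∩ -C
      have hs0 : s = 0 := by linarith [ht, hs]
      have ht0 : t = 0 := by linarith [ht, hs]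
      have hxC : x ∈ C := by rw [hxs, hs0]; simpa using hc₁
      have hxC' : x ∈ -C := by
        rw [Set.mem_neg]
        have : -x ∈ C := by rw [hxt, ht0]; simpa using hc₂
        exact this
      have : x ∈ ({0} : Set (E d)) := hlin ▸ ⟨hxC, hxC'⟩
      exact absurd this hx0
    · -- s + t > 0, so -w ∈ C
      have hw : -w = (s + t)⁻¹ • (c₁ + c₂) := by
        have h1 : (s + t) • w = -(c₁ + c₂) := by
          rw [eq_neg_iff_add_eq_zero, add_comm]
          exact hsum
        have hw' : w = -((s + t)⁻¹ • (c₁ + c₂)) := by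
          have := congrArg (fun z => (s + t)⁻¹ • z) h1
          simpa [smul_smul, inv_mul_cancel₀ (ne_of_gt hst), smul_neg] using this
        simp [hw']
      rw [hw]
      exact hsmul _ (le_of_lt (inv_pos.mpr hst)) _ (hadd _ hc₁ _ hc₂)
  have hnv : -v ∈ C := key v h1
  have hvC : v ∈ C := by simpa using key (-v) h2
  have : v ∈ ({0} : Set (E d)) := hlin ▸ ⟨hvC, by rw [Set.mem_neg]; exact hnv⟩
  exact hv this
end
end

section
/- Let H_1, …, H_m be distinct linear hyperplanes in ℝ^d with ∩_{i=1}^m H_i = {0}. The closed chambers of the arrangement (closures of connected components of ℝ^d \ ∪ H_i) are polyhedral cones, and the union of the dual cones C° over all closed chambers C equals ℝ^d. -/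
open scoped RealInnerProductSpace Pointwise Classical
open Set

noncomputable section

variable {d : ℕ}

/-
Write the hyperplanes as `{z | ⟪n i, z⟫ = 0}`. The connected component through `x` of the
complement of the arrangement is the open sign cell
`{z | ∀ i, 0 < ⟪n i, x⟫ * ⟪n i, z⟫}`: the cell is convex, and by the intermediate value theorem no
`⟪n i, ·⟫` changes sign on the component. Its closure is the polyhedral cone cut out by the
corresponding closed half-spaces.

For the dual cones, minimize `⟪x, ·⟫` over the polytope `Q = {z | ∀ i, |⟪n i, z⟫| ≤ 1}`, which is
compact because the normals span. If the minimum is attained at `z₀` and `w` is a generic point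
near `z₀`, every `y` in the closed chamber of `w` is a feasible direction (`z₀ - t • y ∈ Q` for
small `t > 0`), because `y` never pushes a tight constraint `⟪n i, z₀⟫ = ±1` outwards. Minimality
then gives `⟪x, y⟫ ≤ 0`.
-/

open Filter Topology

theorem eventually_abs_sub_mul_le_one {a b : ℝ} (ha : |a| ≤ 1) (hab : 0 ≤ a * b) :
    ∀ᶠ t in 𝓝[>] (0 : ℝ), |a - t * b| ≤ 1 := by
  rcases ha.lt_or_eq with ha | ha
  · have hcont : Continuous fun t : ℝ => |a - t * b| := by fun_prop
    exact nhdsWithin_le_nhds <| (hcont.continuousAt.eventually_lt continuousAt_const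
      (by simpa using ha)).mono fun _ => le_of_lt
  · have hb : a * b = |b| := by rw [← abs_of_nonneg hab, abs_mul, ha, one_mul]
    have ha2 : a * a = 1 := by rw [← abs_mul_abs_self, ha, one_mul]
    have hsmall : ∀ᶠ t in 𝓝 (0 : ℝ), t * |b| < 1 :=
      (continuous_id.mul continuous_const).continuousAt.eventually_lt continuousAt_const
        (by simp)
    filter_upwards [self_mem_nhdsWithin, nhdsWithin_le_nhds hsmall] with t ht htb
    have hsq : (a - t * b) * (a - t * b) = 1 - t * |b| * (2 - t * |b|) := by
      linear_combination ha2 - 2 * t * hb - t ^ 2 * abs_mul_abs_self b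
    rw [abs_le_one_iff_mul_self_le_one, hsq]
    exact sub_le_self _ (mul_nonneg (mul_nonneg (le_of_lt ht) (abs_nonneg b)) (by linarith))

section InnerProductSpace

variable {F : Type*} [NormedAddCommGroup F] [InnerProductSpace ℝ F] {ι : Type*}

theorem closure_setOf_forall_inner_pos {v : ι → F} {x : F} (hx : ∀ i, 0 < ⟪v i, x⟫) :
    closure {z | ∀ i, 0 < ⟪v i, z⟫} = {z | ∀ i, 0 ≤ ⟪v i, z⟫} := by
  refine Subset.antisymm (closure_minimal (fun z hz i => (hz i).le) ?_) fun z hz => ?_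
  · simp only [ofPred_forall]
    exact isClosed_iInter fun i =>
      isClosed_le continuous_const (continuous_const.inner continuous_id)
  · refine closure_mono ?_ (segment_subset_closure_openSegment (left_mem_segment ℝ z x))
    rintro _ ⟨a, b, ha, hb, -, rfl⟩ i
    rw [inner_add_right, real_inner_smul_right, real_inner_smul_right]
    have := hz i
    have := hx i
    positivity

theorem inner_inner_smul_self_pos {n x : F} (hx : ⟪n, x⟫ ≠ 0) : 0 < ⟪⟪n, x⟫ • n, x⟫ := by
  rw [real_inner_smul_left]
  exact mul_self_pos.2 hx

theorem connectedComponentIn_setOf_forall_inner_ne_zero {n : ι → F} {x : F}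
    (hx : ∀ i, ⟪n i, x⟫ ≠ 0) :
    connectedComponentIn {z | ∀ i, ⟪n i, z⟫ ≠ 0} x = {z | ∀ i, 0 < ⟪⟪n i, x⟫ • n i, z⟫} := by
  refine Subset.antisymm (fun z hz i => ?_) ?_
  · by_contra! hz_nonpos
    have hcont : Continuous fun w => ⟪⟪n i, x⟫ • n i, w⟫ := continuous_const.inner continuous_id
    obtain ⟨w, hw, hw0⟩ := isPreconnected_connectedComponentIn.intermediate_value hz
      (mem_connectedComponentIn hx) hcont.continuousOn
      ⟨hz_nonpos, (inner_inner_smul_self_pos (hx i)).le⟩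
    simp only [real_inner_smul_left] at hw0
    exact mul_ne_zero (hx i) (connectedComponentIn_subset _ _ hw i) hw0
  · refine IsPreconnected.subset_connectedComponentIn ?_
      (fun i => inner_inner_smul_self_pos (hx i)) fun z hz i => ?_
    · refine (convex_iff_forall_pos.2 fun a ha b hb s t hs ht _ i => ?_).isPreconnected
      rw [inner_add_right, real_inner_smul_right, real_inner_smul_right]
      have := ha i
      have := hb i
      positivity
    · have hzi := (hz i).ne'
      rw [real_inner_smul_left] at hzi
      exact right_ne_zero_of_mul hzi

def closedCell (n : ι → F) (w : F) : Set F := {z | ∀ i, 0 ≤ ⟪⟪n i, w⟫ • n i, z⟫}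

theorem closure_connectedComponentIn_eq_closedCell {n : ι → F} {x : F}
    (hx : ∀ i, ⟪n i, x⟫ ≠ 0) :
    closure (connectedComponentIn {z | ∀ i, ⟪n i, z⟫ ≠ 0} x) = closedCell n x := by
  rw [connectedComponentIn_setOf_forall_inner_ne_zero hx]
  exact closure_setOf_forall_inner_pos fun i => inner_inner_smul_self_pos (hx i)

theorem dense_setOf_forall_inner_ne_zero [Finite ι] {n : ι → F} (hn : ∀ i, n i ≠ 0) :
    Dense {z | ∀ i, ⟪n i, z⟫ ≠ 0} := by
  have hdense : ∀ i, Dense {z | ⟪n i, z⟫ ≠ 0} := fun i => by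
    have hint : interior (LinearMap.ker (innerₛₗ ℝ (n i)) : Set F) = ∅ :=
      not_nonempty_iff_eq_empty.1 fun hint => hn i <| inner_self_eq_zero.1 <|
        ((LinearMap.ker _).eq_top_of_nonempty_interior' hint).ge (Submodule.mem_top (x := n i))
    exact interior_eq_empty_iff_dense_compl.1 hint
  have hopen : ∀ i, IsOpen {z | ⟪n i, z⟫ ≠ 0} := fun i =>
    isOpen_ne_fun (continuous_const.inner continuous_id) continuous_const
  simpa [sInter_range, iInter_ofPred] using (finite_range _).dense_sInter (forall_mem_range.2 hopen)
    (forall_mem_range.2 hdense)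

theorem isCompact_setOf_forall_abs_inner_le_one [FiniteDimensional ℝ F] {n : ι → F}
    (hn : ∀ z, (∀ i, ⟪n i, z⟫ = 0) → z = 0) : IsCompact {z | ∀ i, |⟪n i, z⟫| ≤ 1} := by
  let L : F →ₗ[ℝ] ι → ℝ := LinearMap.pi fun i => innerₛₗ ℝ (n i)
  have hL : LinearMap.ker L = ⊥ := LinearMap.ker_eq_bot'.2 fun z hz => hn z (congrFun hz)
  have hQ : {z | ∀ i, |⟪n i, z⟫| ≤ 1} = L ⁻¹' univ.pi fun _ => Icc (-1) 1 := by
    ext z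
    simp only [L, mem_preimage, mem_univ_pi, mem_Icc, LinearMap.pi_apply, abs_le]
    rfl
  rw [hQ]
  exact (LinearMap.isClosedEmbedding_of_injective hL).isCompact_preimage
    (isCompact_univ_pi fun _ => isCompact_Icc)

theorem exists_closedCell_forall_inner_nonpos [Finite ι] [FiniteDimensional ℝ F] {n : ι → F}
    (hn0 : ∀ i, n i ≠ 0) (hn : ∀ z, (∀ i, ⟪n i, z⟫ = 0) → z = 0) (x : F) :
    ∃ w, (∀ i, ⟪n i, w⟫ ≠ 0) ∧ ∀ y ∈ closedCell n w, ⟪x, y⟫ ≤ 0 := by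
  obtain ⟨z₀, hz₀, hmin⟩ := (isCompact_setOf_forall_abs_inner_le_one hn).exists_isMinOn
    ⟨0, fun i => by simp⟩ (by fun_prop : Continuous fun z => ⟪x, z⟫).continuousOn
  have hnear : ∀ᶠ w in 𝓝 z₀, ∀ i, 0 ≤ ⟪n i, z₀⟫ * ⟪n i, w⟫ := by
    refine eventually_all.2 fun i => ?_
    rcases eq_or_ne ⟪n i, z₀⟫ 0 with h | h
    · simp [h]
    · have hc : Continuous fun w => ⟪n i, z₀⟫ * ⟪n i, w⟫ := by fun_prop
      exact (continuousAt_const.eventually_lt hc.continuousAt (mul_self_pos.2 h)).mono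
        fun _ => le_of_lt
  obtain ⟨w, hw, hwz₀⟩ := ((mem_closure_iff_frequently.1
    (dense_setOf_forall_inner_ne_zero hn0 z₀)).and_eventually hnear).exists
  refine ⟨w, hw, fun y hy => ?_⟩
  have hsign : ∀ i, 0 ≤ ⟪n i, z₀⟫ * ⟪n i, y⟫ := fun i => by
    have hwy := hy i
    rw [real_inner_smul_left] at hwy
    exact nonneg_of_mul_nonneg_left ((mul_nonneg (hwz₀ i) hwy).trans_eq (by ring))
      (mul_self_pos.2 (hw i))
  have hfeas : ∀ᶠ t in 𝓝[>] (0 : ℝ), z₀ - t • y ∈ {z | ∀ i, |⟪n i, z⟫| ≤ 1} :=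
    eventually_all.2 fun i => by
      simpa only [inner_sub_right, real_inner_smul_right]
        using eventually_abs_sub_mul_le_one (hz₀ i) (hsign i)
  obtain ⟨t, ht, htQ⟩ := (eventually_mem_nhdsWithin.and hfeas).exists
  have hle : ⟪x, z₀⟫ ≤ ⟪x, z₀ - t • y⟫ := hmin htQ
  rw [inner_sub_right, real_inner_smul_right] at hle
  nlinarith [mem_Ioi.1 ht]

end InnerProductSpace

section Arrangement

variable {ι : Type*}

theorem isPolyCone_closedCell [Fintype ι] (n : ι → E d) (w : E d) :
    IsPolyCone (closedCell n w) := by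
  let e := Fintype.equivFin ι
  refine ⟨Fintype.card ι, fun k => -(⟪n (e.symm k), w⟫ • n (e.symm k)), ?_⟩
  ext z
  simp only [closedCell, mem_ofPred_eq, inner_neg_right, neg_nonpos, real_inner_comm z]
  exact e.symm.forall_congr_right.symm

theorem isChamberOfUnion_iff {S P : Set (E d)} {n : ι → E d}
    (hS : Sᶜ = {z | ∀ i, ⟪n i, z⟫ ≠ 0}) :
    IsChamberOfUnion S P ↔ ∃ x, (∀ i, ⟪n i, x⟫ ≠ 0) ∧ P = closedCell n x := by
  simp only [IsChamberOfUnion, ← mem_compl_iff, hS]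
  refine exists_congr fun x => and_congr_right fun hx => ?_
  rw [closure_connectedComponentIn_eq_closedCell hx]

end Arrangement

/-- for a full-rank linear arrangement, the closed chambers are
polyhedral cones and their dual cones cover `ℝ^d`. -/
theorem stmt2 {d : ℕ} (A : Finset (Set (E d)))
    (hA : ∀ H ∈ A, IsLinearHyperplane H)
    (hrank : (⋂ H ∈ A, H) = ({0} : Set (E d))) :
    (∀ P : Set (E d), IsChamber A P → IsPolyCone P) ∧
    {x : E d | ∃ P, IsChamber A P ∧ x ∈ polarCone P} = Set.univ := by
  choose n hn0 hn using fun H : A => hA H H.2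
  have hmem : ∀ H (hH : H ∈ A) z, z ∈ H ↔ ⟪n ⟨H, hH⟩, z⟫ = 0 := fun H hH =>
    Set.ext_iff.1 (hn ⟨H, hH⟩)
  have hcompl : (⋃ H ∈ A, H)ᶜ = {z | ∀ H : A, ⟪n H, z⟫ ≠ 0} := by
    ext z
    simp +contextual [Subtype.forall, hmem]
  have hspan : ∀ z, (∀ H : A, ⟪n H, z⟫ = 0) → z = 0 := fun z hz => by
    have hz' : z ∈ ⋂ H ∈ A, H := mem_iInter₂.2 fun H hH => (hmem H hH z).2 (hz ⟨H, hH⟩)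
    rwa [hrank] at hz'
  refine ⟨fun P hP => ?_, eq_univ_of_forall fun x => ?_⟩
  · obtain ⟨x, -, rfl⟩ := (isChamberOfUnion_iff hcompl).1 hP
    exact isPolyCone_closedCell n x
  · obtain ⟨w, hw, hxw⟩ := exists_closedCell_forall_inner_nonpos hn0 hspan x
    exact ⟨_, (isChamberOfUnion_iff hcompl).2 ⟨w, hw, rfl⟩, hxw⟩
end
end

section
/- Let P ⊆ ℝ^d be a polyhedral set, x ∈ ℝ^d, and F a face of P. Then the metric projection π_P(x) lies in the relative interior of F if and only if x ∈ relint(F) + N_F(P). -/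
open scoped RealInnerProductSpace Pointwise Classical
open Set

noncomputable section

variable {d : ℕ}

lemma poly_convex {P : Set (E d)} (hP : IsPolyhedron P) : Convex ℝ P := by
  obtain ⟨m, ys, c, rfl⟩ := hP
  intro z hz w hw a b ha hb hab i
  have : ⟪a • z + b • w, ys i⟫ = a * ⟪z, ys i⟫ + b * ⟪w, ys i⟫ := by
    rw [inner_add_left, real_inner_smul_left, real_inner_smul_left]
  rw [Set.mem_setOf_eq] at hz hw
  calc ⟪a • z + b • w, ys i⟫ = a * ⟪z, ys i⟫ + b * ⟪w, ys i⟫ := this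
    _ ≤ a * c i + b * c i := by
        exact add_le_add (mul_le_mul_of_nonneg_left (hz i) ha)
          (mul_le_mul_of_nonneg_left (hw i) hb)
    _ = c i := by rw [← add_mul, hab, one_mul]

lemma face_subset {P F : Set (E d)} (hF : IsFaceOf P F) : F ⊆ P := by
  rcases hF with rfl | ⟨y, c, _, rfl⟩
  · exact subset_rfl
  · exact fun z hz => hz.1

lemma varineq {P : Set (E d)} (hconv : Convex ℝ P) {x y : E d}
    (hy : IsNearestPt P x y) {p : E d} (hp : p ∈ P) : ⟪x - y, p - y⟫ ≤ 0 := by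
  haveI : Nonempty P := ⟨⟨y, hy.1⟩⟩
  have hinf : ‖x - y‖ = ⨅ w : P, ‖x - w‖ := by
    apply le_antisymm
    · exact le_ciInf fun w => by simpa [dist_eq_norm] using hy.2 w w.2
    · exact ciInf_le ⟨0, fun r ⟨w, hw⟩ => hw ▸ norm_nonneg _⟩ (⟨y, hy.1⟩ : P)
  exact (norm_eq_iInf_iff_real_inner_le_zero hconv hy.1).mp hinf p hp

lemma relint_push {F : Set (E d)} {y f₀ : E d} (hy : y ∈ intrinsicInterior ℝ F)
    (hf : f₀ ∈ F) : ∃ t : ℝ, 0 < t ∧ y + t • (y - f₀) ∈ F := by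
  obtain ⟨y', hy', rfl⟩ := mem_intrinsicInterior.mp hy
  have hyspan : (y' : E d) ∈ affineSpan ℝ F := y'.2
  have hfspan : f₀ ∈ affineSpan ℝ F := subset_affineSpan ℝ F hf
  have hmem : ∀ t : ℝ, (y' : E d) + t • ((y' : E d) - f₀) ∈ affineSpan ℝ F := by
    intro t
    have := AffineSubspace.smul_vsub_vadd_mem (affineSpan ℝ F) t hyspan hfspan hyspan
    simpa [vsub_eq_sub, vadd_eq_add, add_comm] using this
  set g : ℝ → affineSpan ℝ F := fun t => ⟨(y' : E d) + t • ((y' : E d) - f₀), hmem t⟩ with hg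
  have hgc : Continuous g := by
    apply Continuous.subtype_mk
    continuity
  have h0 : g 0 = y' := by
    apply Subtype.ext
    simp [hg]
  have hopen : IsOpen (g ⁻¹' interior (((↑) : affineSpan ℝ F → E d) ⁻¹' F)) :=
    isOpen_interior.preimage hgc
  have h0mem : (0 : ℝ) ∈ g ⁻¹' interior (((↑) : affineSpan ℝ F → E d) ⁻¹' F) := by
    simp only [Set.mem_preimage, h0]; exact hy'
  obtain ⟨ε, hε, hball⟩ := Metric.isOpen_iff.mp hopen 0 h0mem
  refine ⟨ε / 2, by positivity, ?_⟩
  have hb : (ε / 2 : ℝ) ∈ Metric.ball (0 : ℝ) ε := by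
    rw [Metric.mem_ball, Real.dist_eq, sub_zero, abs_of_pos (by positivity)]
    linarith
  have hmem2 : g (ε / 2) ∈ interior (((↑) : affineSpan ℝ F → E d) ⁻¹' F) := hball hb
  have hfin : g (ε / 2) ∈ ((Subtype.val ⁻¹' F) : Set (affineSpan ℝ F)) :=
    interior_subset hmem2
  exact hfin

/-- `π_P(x) ∈ relint F ↔ x ∈ relint F + N_F(P)`. -/
theorem stmt5 {d : ℕ} {P : Set (E d)} (hP : IsPolyhedron P) (hne : P.Nonempty)
    {F : Set (E d)} (hF : IsFaceOf P F) (x : E d) :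
    ∀ y : E d, IsNearestPt P x y →
      (y ∈ intrinsicInterior ℝ F ↔ x ∈ intrinsicInterior ℝ F + normalCone P F) := by
  intro y hy
  have hconv := poly_convex hP
  have hFP := face_subset hF
  constructor
  · intro hyF
    have hxy : x - y ∈ normalCone P F := by
      intro f₀ hf₀ u hu
      obtain ⟨δ, hδ, hδu⟩ := hu
      have hf₀F : f₀ ∈ F := intrinsicInterior_subset hf₀
      have h1 : ⟪x - y, f₀ - y⟫ ≤ 0 := varineq hconv hy (hFP hf₀F)
      obtain ⟨t, ht, htF⟩ := relint_push hyF hf₀F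
      have h2 : ⟪x - y, (y + t • (y - f₀)) - y⟫ ≤ 0 := varineq hconv hy (hFP htF)
      have h2' : t * ⟪x - y, y - f₀⟫ ≤ 0 := by
        have he : (y + t • (y - f₀)) - y = t • (y - f₀) := by abel
        rwa [he, real_inner_smul_right] at h2
      have h3 : ⟪x - y, y - f₀⟫ ≤ 0 := nonpos_of_mul_nonpos_right h2' ht
      have h4 : ⟪x - y, f₀ - y⟫ = 0 := by
        have : ⟪x - y, f₀ - y⟫ = -⟪x - y, y - f₀⟫ := by
          rw [← inner_neg_right]; congr 1; abel
        linarith [this ▸ h1, h3, this]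
      have h5 : ⟪x - y, (f₀ + δ • u) - y⟫ ≤ 0 := varineq hconv hy hδu
      have h6 : ⟪x - y, (f₀ + δ • u) - y⟫ = ⟪x - y, f₀ - y⟫ + δ * ⟪x - y, u⟫ := by
        have : (f₀ + δ • u) - y = (f₀ - y) + δ • u := by abel
        rw [this, inner_add_right, real_inner_smul_right]
      have h7 : δ * ⟪x - y, u⟫ ≤ 0 := by rw [h6, h4, zero_add] at h5; exact h5
      exact nonpos_of_mul_nonpos_right h7 hδ
    have : y + (x - y) = x := by abel
    exact this ▸ Set.add_mem_add hyF hxy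
  · rintro hx
    rw [Set.mem_add] at hx
    obtain ⟨f, hf, z, hz, hfz⟩ := hx
    have hfF : f ∈ F := intrinsicInterior_subset hf
    have hfP : f ∈ P := hFP hfF
    have hzin : ∀ p ∈ P, ⟪z, p - f⟫ ≤ 0 := by
      intro p hp
      exact hz f hf (p - f) ⟨1, one_pos, by simpa using hp⟩
    have hzxf : z = x - f := by rw [← hfz]; abel
    have key : ‖x - f‖ ^ 2 + ‖y - f‖ ^ 2 ≤ ‖x - y‖ ^ 2 := by
      have hy1 := hzin y hy.1
      rw [hzxf] at hy1
      have expand : ‖x - y‖ ^ 2 = ‖x - f‖ ^ 2 - 2 * ⟪x - f, y - f⟫ + ‖y - f‖ ^ 2 := by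
        have : x - y = (x - f) - (y - f) := by abel
        rw [this, norm_sub_sq_real]
      nlinarith
    have hle : ‖x - y‖ ≤ ‖x - f‖ := by
      have := hy.2 f hfP
      simpa [dist_eq_norm] using this
    have : ‖y - f‖ ^ 2 ≤ 0 := by nlinarith [norm_nonneg (x - y), norm_nonneg (x - f)]
    have hyf : y = f := by
      have : ‖y - f‖ = 0 := le_antisymm (by nlinarith [norm_nonneg (y - f)]) (norm_nonneg _)
      exact sub_eq_zero.mp (norm_eq_zero.mp this)
    exact hyf ▸ hf
end
end

section
/- Let A be an affine hyperplane arrangement in ℝ^d, with characteristic polynomial coefficients a_k defined by χ_A(t) = Σ_{k=0}^d (−1)^{d−k} a_k t^k. Then the total number of closed chambers of A equals Σ_{k=0}^d a_k = (−1)^d χ_A(−1). (Zaslavsky's first formula, derived from the projection-counting identity.) -/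
open scoped RealInnerProductSpace Pointwise Classical
open Set

noncomputable section

variable {d : ℕ}

/-!
Deletion–restriction. Points off the arrangement are grouped into cells by lying on the same side
of every hyperplane; cells are open and convex, hence exactly the connected components of the
complement, and distinct cells have distinct closures. Adding a hyperplane `H` to an arrangement
`L` cuts in two exactly the regions of `L` that meet `H`, and these correspond to the regions of
the arrangement induced by `L` on `H ≅ ℝ^(d-1)`. So `r(L + H) = r(L) + r(L^H)`, while Whitney's
signed sum over subfamilies satisfies `w(L + H) = w(L) - w(L^H)`; induction on the number of
hyperplanes gives `r = (-1)^d w`.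
-/

namespace HyperplaneArrangement

open Module Topology

section Sides

variable {V : Type*} [AddCommGroup V] [Module ℝ V]

def SameSide (H : Set V) (x z : V) : Prop := Disjoint (segment ℝ x z) H

/-- `f = 0` is allowed so that the class is closed under restriction to a hyperplane: parallel
hyperplanes restrict to `∅`, a repeated one to the whole space. -/
def IsLevelSet (H : Set V) : Prop := ∃ (f : Dual ℝ V) (c : ℝ), H = {z | f z = c}

variable {H : Set V} {f : Dual ℝ V} {c : ℝ} {x z w : V}

theorem sameSide_levelSet_iff : SameSide {w | f w = c} x z ↔ c ∉ uIcc (f x) (f z) := by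
  rw [SameSide, ← segment_eq_uIcc, ← f.coe_toAffineMap, ← image_segment]
  simp [disjoint_left]

theorem SameSide.symm (h : SameSide H x z) : SameSide H z x := by
  rwa [SameSide, segment_symm]

theorem SameSide.left_notMem (h : SameSide H x z) : x ∉ H :=
  h.notMem_of_mem_left (left_mem_segment ℝ x z)

theorem SameSide.right_notMem (h : SameSide H x z) : z ∉ H :=
  h.symm.left_notMem

theorem sameSide_self (hx : x ∉ H) : SameSide H x x := by
  rwa [SameSide, segment_same, disjoint_singleton_left]

theorem SameSide.trans (hH : IsLevelSet H) (h₁ : SameSide H x z) (h₂ : SameSide H z w) :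
    SameSide H x w := by
  obtain ⟨f, c, rfl⟩ := hH
  rw [sameSide_levelSet_iff] at h₁ h₂ ⊢
  exact fun hc => (uIcc_subset_uIcc_union_uIcc hc).elim h₁ h₂

theorem SameSide.mono (h : SameSide H x z) (hw : w ∈ segment ℝ x z) : SameSide H x w :=
  h.mono_left ((convex_segment x z).segment_subset (left_mem_segment ℝ x z) hw)

theorem setOf_sameSide_of_lt (hx : c < f x) :
    {z | SameSide {w | f w = c} x z} = {z | c < f z} := by
  ext z
  simp only [mem_ofPred_eq, sameSide_levelSet_iff, mem_uIcc]
  constructor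
  · intro h; by_contra! hz; exact h (Or.inr ⟨hz, hx.le⟩)
  · rintro hz (⟨h, -⟩ | ⟨h, -⟩) <;> linarith

theorem setOf_sameSide_of_gt (hx : f x < c) :
    {z | SameSide {w | f w = c} x z} = {z | f z < c} := by
  ext z
  simp only [mem_ofPred_eq, sameSide_levelSet_iff, mem_uIcc]
  constructor
  · intro h; by_contra! hz; exact h (Or.inl ⟨hx.le, hz⟩)
  · rintro hz (⟨-, h⟩ | ⟨-, h⟩) <;> linarith

theorem inter_nonempty_of_convex_of_apply_lt_of_lt_apply {C : Set V} {p q : V}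
    (hC : Convex ℝ C) (hp : p ∈ C) (hq : q ∈ C) (hpc : f p < c) (hqc : c < f q) :
    (C ∩ {z | f z = c}).Nonempty := by
  have : ¬SameSide {z | f z = c} p q := by
    rw [sameSide_levelSet_iff, not_not]
    exact mem_uIcc_of_le hpc.le hqc.le
  obtain ⟨w, hw, hwc⟩ := not_disjoint_iff.1 this
  exact ⟨w, hC.segment_subset hp hq hw, hwc⟩

theorem isLevelSet_preimage {P : Type*} [AddCommGroup P] [Module ℝ P] (φ : P →ᵃ[ℝ] V)
    (hH : IsLevelSet H) : IsLevelSet (φ ⁻¹' H) := by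
  obtain ⟨f, c, rfl⟩ := hH
  refine ⟨f ∘ₗ φ.linear, c - f (φ 0), ?_⟩
  ext w
  rw [mem_preimage, mem_ofPred_eq, mem_ofPred_eq, congrFun φ.decomp w, Pi.add_apply, map_add,
    LinearMap.comp_apply, eq_sub_iff_add_eq]

theorem sameSide_preimage_iff {P : Type*} [AddCommGroup P] [Module ℝ P] (φ : P →ᵃ[ℝ] V)
    {x z : P} : SameSide (φ ⁻¹' H) x z ↔ SameSide H (φ x) (φ z) := by
  rw [SameSide, SameSide, ← image_segment, disjoint_image_left]

theorem exists_affineMap_ker_range_eq {f : Dual ℝ V} (hf : f ≠ 0) (c : ℝ) :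
    ∃ φ : LinearMap.ker f →ᵃ[ℝ] V, Function.Injective φ ∧ range φ = {z | f z = c} := by
  obtain ⟨p, hp⟩ := LinearMap.surjective hf c
  refine ⟨(AffineEquiv.vaddConst ℝ p).toAffineMap.comp (LinearMap.ker f).subtype.toAffineMap,
    (AffineEquiv.vaddConst ℝ p).injective.comp Subtype.val_injective, ?_⟩
  ext z
  simp only [AffineMap.coe_comp, AffineEquiv.coe_toAffineMap, LinearMap.coe_toAffineMap,
    Function.comp_apply, AffineEquiv.vaddConst_apply, Submodule.coe_subtype, vadd_eq_add,
    mem_range, mem_ofPred_eq, Subtype.exists, LinearMap.mem_ker, exists_prop]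
  constructor
  · rintro ⟨w, hw, rfl⟩
    simp [hw, hp]
  · intro hz
    exact ⟨z - p, by simp [hz, hp], sub_add_cancel z p⟩

end Sides

section Cells

variable {V : Type*} [AddCommGroup V] [Module ℝ V] {L : Multiset (Set V)} {H C C₁ C₂ : Set V}
  {x z p : V}

def cell (L : Multiset (Set V)) (x : V) : Set V := {z | ∀ H ∈ L, SameSide H x z}

def regions (L : Multiset (Set V)) : Set (Set V) := cell L '' (⋃ H ∈ L, H)ᶜ

theorem mem_cell_self (hx : x ∈ (⋃ H ∈ L, H)ᶜ) : x ∈ cell L x := fun _ hH =>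
  sameSide_self fun hxH => hx (mem_biUnion hH hxH)

theorem cell_subset_compl : cell L x ⊆ (⋃ H ∈ L, H)ᶜ := by
  intro z hz hzL
  obtain ⟨H, hH, hzH⟩ := mem_iUnion₂.1 hzL
  exact (hz H hH).right_notMem hzH

theorem cell_eq_of_mem (hL : ∀ H ∈ L, IsLevelSet H) (hz : z ∈ cell L x) :
    cell L z = cell L x := by
  ext w
  exact ⟨fun hw H hH => (hz H hH).trans (hL H hH) (hw H hH),
    fun hw H hH => (hz H hH).symm.trans (hL H hH) (hw H hH)⟩

theorem convex_cell (hL : ∀ H ∈ L, IsLevelSet H) : Convex ℝ (cell L x) := by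
  refine convex_iff_segment_subset.2 fun z₁ h₁ z₂ h₂ w hw H hH => ?_
  exact (h₁ H hH).trans (hL H hH) (((h₁ H hH).symm.trans (hL H hH) (h₂ H hH)).mono hw)

theorem eq_of_mem_regions (hL : ∀ H ∈ L, IsLevelSet H) (h₁ : C₁ ∈ regions L)
    (h₂ : C₂ ∈ regions L) (hz₁ : z ∈ C₁) (hz₂ : z ∈ C₂) : C₁ = C₂ := by
  obtain ⟨x₁, -, rfl⟩ := h₁
  obtain ⟨x₂, -, rfl⟩ := h₂
  rw [← cell_eq_of_mem hL hz₁, cell_eq_of_mem hL hz₂]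

theorem cell_cons : cell (H ::ₘ L) x = cell L x ∩ {z | SameSide H x z} := by
  ext z
  simp [cell, and_comm]

theorem preimage_cell {P : Type*} [AddCommGroup P] [Module ℝ P] (φ : P →ᵃ[ℝ] V) (w : P) :
    φ ⁻¹' cell L (φ w) = cell (L.map (φ ⁻¹' ·)) w := by
  ext z
  simp [cell, sameSide_preimage_iff]

theorem regions_zero : regions (0 : Multiset (Set V)) = {univ} := by
  simp [regions, cell]

theorem regions_cons_empty : regions ((∅ : Set V) ::ₘ L) = regions L := by
  have hcell : cell ((∅ : Set V) ::ₘ L) = cell L := by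
    ext x z
    simp [cell_cons, SameSide]
  simp [regions, hcell]

theorem regions_cons_univ : regions ((univ : Set V) ::ₘ L) = ∅ := by
  simp [regions]

theorem inter_mem_regions_cons (hL : ∀ H ∈ L, IsLevelSet H) (hC : C ∈ regions L)
    (hp : p ∈ C) (hpH : p ∉ H) : C ∩ {z | SameSide H p z} ∈ regions (H ::ₘ L) := by
  obtain ⟨x, -, rfl⟩ := hC
  refine ⟨p, ?_, by rw [cell_cons, cell_eq_of_mem hL hp]⟩
  simpa [hpH] using cell_subset_compl hp

theorem regions_cons_eq (hL : ∀ H ∈ L, IsLevelSet H) (f : Dual ℝ V) (c : ℝ) :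
    regions ({z | f z = c} ::ₘ L) =
      (· ∩ {z | c < f z}) '' {C ∈ regions L | (C ∩ {z | c < f z}).Nonempty} ∪
      (· ∩ {z | f z < c}) '' {C ∈ regions L | (C ∩ {z | f z < c}).Nonempty} := by
  apply Subset.antisymm
  · rintro _ ⟨p, hp, rfl⟩
    simp only [Multiset.mem_cons, iUnion_iUnion_eq_or_left, compl_union, mem_inter_iff,
      mem_compl_iff, mem_ofPred_eq] at hp
    obtain ⟨hpc, hpL⟩ := hp
    have hC : cell L p ∈ regions L := ⟨p, hpL, rfl⟩
    rw [cell_cons]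
    rcases lt_or_gt_of_ne hpc with h | h
    · rw [setOf_sameSide_of_gt h]
      exact Or.inr ⟨cell L p, ⟨hC, p, mem_cell_self hpL, h⟩, rfl⟩
    · rw [setOf_sameSide_of_lt h]
      exact Or.inl ⟨cell L p, ⟨hC, p, mem_cell_self hpL, h⟩, rfl⟩
  · rintro _ (⟨C, ⟨hC, p, hpC, hp⟩, rfl⟩ | ⟨C, ⟨hC, p, hpC, hp⟩, rfl⟩)
    · rw [← setOf_sameSide_of_lt hp]
      exact inter_mem_regions_cons hL hC hpC hp.ne'
    · rw [← setOf_sameSide_of_gt hp]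
      exact inter_mem_regions_cons hL hC hpC hp.ne

theorem finite_regions (hL : ∀ H ∈ L, IsLevelSet H) : (regions L).Finite := by
  induction L using Multiset.induction_on with
  | empty => simp [regions_zero]
  | cons H L ih =>
    have hL' : ∀ K ∈ L, IsLevelSet K := fun K hK => hL K (Multiset.mem_cons_of_mem hK)
    obtain ⟨f, c, rfl⟩ := hL H (Multiset.mem_cons_self H L)
    rw [regions_cons_eq hL']
    exact (((ih hL').subset (sep_subset _ _)).image _).union
      (((ih hL').subset (sep_subset _ _)).image _)

theorem injOn_inter_regions (hL : ∀ H ∈ L, IsLevelSet H) (S : Set V) :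
    InjOn (· ∩ S) {C ∈ regions L | (C ∩ S).Nonempty} := by
  rintro C₁ ⟨h₁, z, hz⟩ C₂ ⟨h₂, -⟩ (h : C₁ ∩ S = C₂ ∩ S)
  have hz₂ : z ∈ C₂ ∩ S := h ▸ hz
  exact eq_of_mem_regions hL h₁ h₂ hz.1 hz₂.1

theorem ncard_regions_map_preimage (hL : ∀ H ∈ L, IsLevelSet H) {P : Type*} [AddCommGroup P]
    [Module ℝ P] (φ : P →ᵃ[ℝ] V) :
    (regions (L.map (φ ⁻¹' ·))).ncard =
      {C ∈ regions L | (C ∩ range φ).Nonempty}.ncard := by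
  have himage : (φ ⁻¹' ·) '' {C ∈ regions L | (C ∩ range φ).Nonempty} =
      regions (L.map (φ ⁻¹' ·)) := by
    ext D
    constructor
    · rintro ⟨C, ⟨hC, _, hw, w, rfl⟩, rfl⟩
      obtain ⟨x, -, rfl⟩ := hC
      refine ⟨w, by simpa using cell_subset_compl hw, ?_⟩
      rw [← preimage_cell, cell_eq_of_mem hL hw]
    · rintro ⟨w, hw, rfl⟩
      have hφw : φ w ∈ (⋃ H ∈ L, H)ᶜ := by simpa using hw
      exact ⟨cell L (φ w), ⟨⟨φ w, hφw, rfl⟩, φ w, mem_cell_self hφw, w, rfl⟩,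
        preimage_cell φ w⟩
  have hinj : InjOn (φ ⁻¹' ·) {C ∈ regions L | (C ∩ range φ).Nonempty} := by
    rintro C₁ ⟨h₁, _, hw, w, rfl⟩ C₂ ⟨h₂, -⟩ (h : φ ⁻¹' C₁ = φ ⁻¹' C₂)
    have hw₂ : w ∈ φ ⁻¹' C₂ := h ▸ hw
    exact eq_of_mem_regions hL h₁ h₂ hw hw₂
  rw [← himage, hinj.ncard_image]

end Cells

section Topology

variable {V : Type*} [NormedAddCommGroup V] [NormedSpace ℝ V]
  {L : Multiset (Set V)} {H C : Set V} {f : Dual ℝ V} {c : ℝ} {x z p : V}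

theorem exists_mem_lt_apply (hf : f ≠ 0) (hC : IsOpen C) (hp : p ∈ C) :
    ∃ q ∈ C, f p < f q := by
  obtain ⟨v, hv⟩ := LinearMap.surjective hf 1
  have hline : ∀ᶠ t in 𝓝 (0 : ℝ), p + t • v ∈ C := by
    have : Continuous fun t : ℝ => p + t • v := by fun_prop
    exact this.continuousAt.preimage_mem_nhds (by simpa using hC.mem_nhds hp)
  obtain ⟨t, ht, htC⟩ := hline.exists_gt
  exact ⟨_, htC, by simpa [hv]⟩

theorem exists_mem_apply_lt (hf : f ≠ 0) (hC : IsOpen C) (hp : p ∈ C) :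
    ∃ q ∈ C, f q < f p := by
  obtain ⟨q, hq, h⟩ := exists_mem_lt_apply (neg_ne_zero.2 hf) hC hp
  exact ⟨q, hq, by simpa using h⟩

variable [FiniteDimensional ℝ V]

theorem sameSide_of_isPreconnected {S : Set V} (hS : IsPreconnected S)
    (hSH : Disjoint S {w | f w = c}) (hx : x ∈ S) (hz : z ∈ S) :
    SameSide {w | f w = c} x z := by
  rw [sameSide_levelSet_iff]
  intro hc
  have hfS := hS.image f f.continuous_of_finiteDimensional.continuousOn
  obtain ⟨w, hw, hwc⟩ :=
    hfS.ordConnected.uIcc_subset (mem_image_of_mem f hx) (mem_image_of_mem f hz) hc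
  exact hSH.notMem_of_mem_left hw hwc

theorem isOpen_setOf_sameSide (hH : IsLevelSet H) (x : V) : IsOpen {z | SameSide H x z} := by
  obtain ⟨f, c, rfl⟩ := hH
  have hf : Continuous f := f.continuous_of_finiteDimensional
  rcases lt_trichotomy (f x) c with h | h | h
  · rw [setOf_sameSide_of_gt h]
    exact isOpen_lt hf continuous_const
  · convert isOpen_empty
    exact eq_empty_of_forall_notMem fun z hz => hz.left_notMem h
  · rw [setOf_sameSide_of_lt h]
    exact isOpen_lt continuous_const hf

theorem isOpen_cell (hL : ∀ H ∈ L, IsLevelSet H) : IsOpen (cell L x) := by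
  have : cell L x = ⋂ H ∈ L.toFinset, {z | SameSide H x z} := by
    ext z
    simp [cell]
  rw [this]
  exact isOpen_biInter_finset fun H hH =>
    isOpen_setOf_sameSide (hL H (Multiset.mem_toFinset.1 hH)) x

theorem connectedComponentIn_eq_cell (hL : ∀ H ∈ L, IsLevelSet H) (hx : x ∈ (⋃ H ∈ L, H)ᶜ) :
    connectedComponentIn (⋃ H ∈ L, H)ᶜ x = cell L x := by
  apply Subset.antisymm
  · intro z hz H hH
    obtain ⟨f, c, rfl⟩ := hL H hH
    refine sameSide_of_isPreconnected isPreconnected_connectedComponentIn ?_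
      (mem_connectedComponentIn hx) hz
    exact disjoint_left.2 fun w hw hwH => connectedComponentIn_subset _ _ hw (mem_biUnion hH hwH)
  · exact (convex_cell hL).isPreconnected.subset_connectedComponentIn (mem_cell_self hx)
      cell_subset_compl

theorem injOn_closure_regions (hL : ∀ H ∈ L, IsLevelSet H) : InjOn closure (regions L) := by
  rintro _ ⟨x₁, hx₁, rfl⟩ C₂ hC₂ h
  by_contra hne
  have hdisj : Disjoint (cell L x₁) C₂ := disjoint_left.2 fun z h₁ h₂ =>
    hne (eq_of_mem_regions hL ⟨x₁, hx₁, rfl⟩ hC₂ h₁ h₂)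
  have := (hdisj.closure_right (isOpen_cell hL)).notMem_of_mem_left (mem_cell_self hx₁)
  exact this (h ▸ subset_closure (mem_cell_self hx₁))

end Topology

section Whitney

variable {V : Type*} [AddCommGroup V] [Module ℝ V] {F H : Set V} {L : Multiset (Set V)}

def affDim (F : Set V) : ℕ := finrank ℝ (affineSpan ℝ F).direction

def signedDim (F : Set V) : ℤ := if F.Nonempty then (-1) ^ affDim F else 0

def whitneySum (F : Set V) (L : Multiset (Set V)) : ℤ :=
  (L.powerset.map fun S => (-1) ^ Multiset.card S * signedDim (F ∩ ⋂ H ∈ S, H)).sum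

theorem whitneySum_zero : whitneySum F 0 = signedDim F := by
  simp [whitneySum]

theorem whitneySum_cons : whitneySum F (H ::ₘ L) = whitneySum F L - whitneySum (F ∩ H) L := by
  simp [whitneySum, Multiset.powerset_cons, Set.iInter_iInter_eq_or_left, pow_succ, inter_assoc,
    sub_eq_add_neg, Multiset.sum_map_neg]

theorem whitneySum_empty : whitneySum ∅ L = 0 := by
  simp [whitneySum, signedDim]

theorem affDim_image {P : Type*} [AddCommGroup P] [Module ℝ P] {φ : P →ᵃ[ℝ] V}
    (hφ : Function.Injective φ) (F : Set P) : affDim (φ '' F) = affDim F := by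
  rw [affDim, affDim, ← AffineSubspace.map_span, AffineSubspace.map_direction]
  exact (Submodule.equivMapOfInjective _ (φ.linear_injective_iff.2 hφ) _).finrank_eq.symm

theorem whitneySum_image {P : Type*} [AddCommGroup P] [Module ℝ P] {φ : P →ᵃ[ℝ] V}
    (hφ : Function.Injective φ) (F : Set P) :
    whitneySum (φ '' F) L = whitneySum F (L.map (φ ⁻¹' ·)) := by
  induction L using Multiset.induction_on generalizing F with
  | empty => simp [whitneySum_zero, signedDim, affDim_image hφ]
  | cons H L ih =>
    rw [Multiset.map_cons, whitneySum_cons, whitneySum_cons, ← image_inter_preimage, ih, ih]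

theorem whitneySum_finset_val (F : Set V) (A : Finset (Set V)) :
    whitneySum F A.val = ∑ B ∈ A.powerset, (-1) ^ B.card * signedDim (F ∩ ⋂ H ∈ B, H) := by
  induction A using Finset.induction_on generalizing F with
  | empty => simp [whitneySum_zero]
  | insert a A ha ih =>
    rw [Finset.insert_val_of_notMem ha, whitneySum_cons, ih, ih, Finset.sum_powerset_insert ha,
      sub_eq_add_neg, ← Finset.sum_neg_distrib]
    congr 1
    refine Finset.sum_congr rfl fun B hB => ?_
    have haB : a ∉ B := fun h => ha (Finset.mem_powerset.1 hB h)
    rw [Finset.card_insert_of_notMem haB, Finset.set_biInter_insert, ← inter_assoc, pow_succ]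
    ring

end Whitney

section Counting

variable {V : Type*} [NormedAddCommGroup V] [NormedSpace ℝ V] [FiniteDimensional ℝ V]
  {L : Multiset (Set V)}

theorem ncard_regions_cons (hL : ∀ H ∈ L, IsLevelSet H) {f : Dual ℝ V} (hf : f ≠ 0) (c : ℝ) :
    (regions ({z | f z = c} ::ₘ L)).ncard =
      (regions L).ncard + {C ∈ regions L | (C ∩ {z | f z = c}).Nonempty}.ncard := by
  set R := regions L
  -- A region reaches both open sides iff it meets the hyperplane, and it always reaches one.
  set Rp := {C ∈ R | (C ∩ {z | c < f z}).Nonempty}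
  set Rm := {C ∈ R | (C ∩ {z | f z < c}).Nonempty}
  have hfin : R.Finite := finite_regions hL
  have hdisj : Disjoint ((· ∩ {z | c < f z}) '' Rp) ((· ∩ {z | f z < c}) '' Rm) := by
    refine disjoint_left.2 ?_
    rintro _ ⟨C₁, ⟨-, z, hz₁, hz⟩, rfl⟩
      ⟨C₂, -, (h : C₂ ∩ {z | f z < c} = C₁ ∩ {z | c < f z})⟩
    have hz₂ : z ∈ C₂ ∩ {z | f z < c} := h ▸ ⟨hz₁, hz⟩
    have hlt : f z < c := hz₂.2
    exact lt_asymm hz hlt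
  have hunion : Rp ∪ Rm = R := by
    refine Subset.antisymm (union_subset (sep_subset _ _) (sep_subset _ _)) fun C hC => ?_
    obtain ⟨x, hx, rfl⟩ := id hC
    have hxx := mem_cell_self hx
    rcases lt_trichotomy (f x) c with h | h | h
    · exact Or.inr ⟨hC, x, hxx, h⟩
    · obtain ⟨q, hq, hxq⟩ := exists_mem_lt_apply hf (isOpen_cell hL) hxx
      exact Or.inl ⟨hC, q, hq, h ▸ hxq⟩
    · exact Or.inl ⟨hC, x, hxx, h⟩
  have hinter : Rp ∩ Rm = {C ∈ R | (C ∩ {z | f z = c}).Nonempty} := by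
    ext C
    constructor
    · rintro ⟨⟨hC, q, hq, hqc⟩, -, p, hp, hpc⟩
      obtain ⟨x, -, rfl⟩ := id hC
      exact ⟨hC,
        inter_nonempty_of_convex_of_apply_lt_of_lt_apply (convex_cell hL) hp hq hpc hqc⟩
    · rintro ⟨hC, p, hp, hpc⟩
      obtain ⟨x, -, rfl⟩ := id hC
      obtain ⟨q, hq, hpq⟩ := exists_mem_lt_apply hf (isOpen_cell hL) hp
      obtain ⟨q', hq', hq'p⟩ := exists_mem_apply_lt hf (isOpen_cell hL) hp
      exact ⟨⟨hC, q, hq, hpc ▸ hpq⟩, hC, q', hq', hpc ▸ hq'p⟩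
  rw [regions_cons_eq hL, ncard_union_eq hdisj ((hfin.subset (sep_subset _ _)).image _)
      ((hfin.subset (sep_subset _ _)).image _), (injOn_inter_regions hL _).ncard_image,
    (injOn_inter_regions hL _).ncard_image, ← ncard_union_add_ncard_inter _ _
      (hfin.subset (sep_subset _ _)) (hfin.subset (sep_subset _ _)), hunion, hinter]

theorem ncard_regions_eq_whitneySum (L : Multiset (Set V)) (hL : ∀ H ∈ L, IsLevelSet H) :
    ((regions L).ncard : ℤ) = (-1) ^ finrank ℝ V * whitneySum univ L := by
  induction hn : Multiset.card L generalizing V L with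
  | zero =>
    rw [Multiset.card_eq_zero.1 hn, regions_zero, whitneySum_zero, signedDim,
      if_pos univ_nonempty, affDim, AffineSubspace.span_univ, AffineSubspace.direction_top,
      finrank_top, ← mul_pow]
    simp
  | succ n ih =>
    obtain ⟨H, L, rfl, hL_card⟩ := Multiset.card_eq_succ_iff.1 hn
    have hL' : ∀ K ∈ L, IsLevelSet K := fun K hK => hL K (Multiset.mem_cons_of_mem hK)
    obtain ⟨f, c, rfl⟩ := hL H (Multiset.mem_cons_self _ L)
    by_cases hf : f = 0
    · subst hf
      by_cases hc : c = 0
      · have : {z : V | (0 : Dual ℝ V) z = c} = univ := by simp [hc]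
        rw [this, regions_cons_univ, whitneySum_cons, univ_inter, sub_self]
        simp
      · have : {z : V | (0 : Dual ℝ V) z = c} = ∅ := by simp [Ne.symm hc]
        rw [this, regions_cons_empty, whitneySum_cons, inter_empty, whitneySum_empty, sub_zero]
        exact ih L hL' hL_card
    · obtain ⟨φ, hφ, hrange⟩ := exists_affineMap_ker_range_eq hf c
      have hres := ih (L.map (φ ⁻¹' ·))
        (fun K' hK' => by
          obtain ⟨K, hK, rfl⟩ := Multiset.mem_map.1 hK'
          exact isLevelSet_preimage φ (hL' K hK))
        (by rw [Multiset.card_map, hL_card])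
      rw [ncard_regions_cons hL' hf, whitneySum_cons, univ_inter, ← hrange,
        ← ncard_regions_map_preimage hL' φ, ← image_univ, whitneySum_image hφ, Nat.cast_add,
        ih L hL' hL_card, hres, ← Module.Dual.finrank_ker_add_one_of_ne_zero hf]
      ring

end Counting

section EuclideanSpace

theorem isLevelSet_of_isHyperplane {H : Set (E d)} (hH : IsHyperplane H) : IsLevelSet H := by
  obtain ⟨y, c, -, rfl⟩ := hH
  exact ⟨innerₗ _ y, c, rfl⟩

theorem ncard_setOf_isChamber {A : Finset (Set (E d))} (hA : ∀ H ∈ A, IsLevelSet H) :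
    {P | IsChamber A P}.ncard = (regions A.val).ncard := by
  have hL : ∀ H ∈ A.val, IsLevelSet H := hA
  have : {P | IsChamber A P} = closure '' regions A.val := by
    ext P
    constructor
    · rintro ⟨x, hx, rfl⟩
      exact ⟨cell A.val x, ⟨x, hx, rfl⟩,
        congrArg closure (connectedComponentIn_eq_cell hL hx).symm⟩
    · rintro ⟨_, ⟨x, hx, rfl⟩, rfl⟩
      exact ⟨x, hx, congrArg closure (connectedComponentIn_eq_cell hL hx).symm⟩
  rw [this, (injOn_closure_regions hL).ncard_image]

theorem whitneySum_univ_finset_val (A : Finset (Set (E d))) :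
    whitneySum univ A.val = ∑ B ∈ A.powerset,
      if (interSet B).Nonempty then (-1 : ℤ) ^ B.card * (-1 : ℤ) ^ sdim (interSet B) else 0 := by
  rw [whitneySum_finset_val]
  refine Finset.sum_congr rfl fun B _ => ?_
  rw [univ_inter, signedDim, mul_ite, mul_zero]
  rfl

theorem sdim_le (F : Set (E d)) : sdim F ≤ d :=
  (Submodule.finrank_le _).trans_eq (finrank_euclideanSpace_fin)

theorem neg_one_pow_sub {m n : ℕ} (h : n ≤ m) : (-1 : ℤ) ^ (m - n) = (-1) ^ m * (-1) ^ n :=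
  calc (-1 : ℤ) ^ (m - n) = (-1) ^ (m - n) * (-1) ^ n * (-1) ^ n := by
        rw [mul_assoc, ← pow_add, Even.neg_one_pow ⟨n, rfl⟩, mul_one]
    _ = (-1) ^ m * (-1) ^ n := by rw [pow_sub_mul_pow _ h]

theorem sum_charCoeff (A : Finset (Set (E d))) :
    ∑ k ∈ Finset.range (d + 1), charCoeff A k = (-1 : ℤ) ^ d * ∑ B ∈ A.powerset,
      if (interSet B).Nonempty then (-1 : ℤ) ^ B.card * (-1 : ℤ) ^ sdim (interSet B) else 0 := by
  simp only [charCoeff, Finset.mul_sum]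
  rw [Finset.sum_comm]
  refine Finset.sum_congr rfl fun B _ => ?_
  by_cases hB : (interSet B).Nonempty
  · simp only [hB, true_and, if_true, mul_ite, mul_zero, Finset.sum_ite_eq, Finset.mem_range,
      Nat.lt_succ_of_le (sdim_le (interSet B))]
    rw [neg_one_pow_sub (sdim_le _)]
    ring
  · simp [hB]

end EuclideanSpace

end HyperplaneArrangement

/-- Zaslavsky's first formula: the number of closed chambers
equals `Σ_k a_k = (-1)^d χ_A(-1)`. -/
theorem stmt8 {d : ℕ} (A : Finset (Set (E d)))
    (hA : ∀ H ∈ A, IsHyperplane H) :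
    (Set.ncard {P : Set (E d) | IsChamber A P} : ℤ)
      = ∑ k ∈ Finset.range (d + 1), charCoeff A k ∧
    (Set.ncard {P : Set (E d) | IsChamber A P} : ℤ)
      = (-1 : ℤ) ^ d * ∑ B ∈ A.powerset,
          if (interSet B).Nonempty then (-1 : ℤ) ^ B.card * (-1 : ℤ) ^ sdim (interSet B)
          else 0 := by
  have hL : ∀ H ∈ A, HyperplaneArrangement.IsLevelSet H := fun H hH =>
    HyperplaneArrangement.isLevelSet_of_isHyperplane (hA H hH)
  have hcount := HyperplaneArrangement.ncard_regions_eq_whitneySum A.val hL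
  rw [finrank_euclideanSpace_fin, HyperplaneArrangement.whitneySum_univ_finset_val,
    ← HyperplaneArrangement.ncard_setOf_isChamber hL] at hcount
  exact ⟨hcount.trans (HyperplaneArrangement.sum_charCoeff A).symm, hcount⟩
end
end
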